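/- For every integer k ≥ 2 there exists a constant c_k > 0 and an N such that for every n ≥ N there exists a C_{2k}-free graph on n vertices with at least c_k · n^{1 + 1/(2k-1)} edges. -/

import Mathlib

open Finset

/-- `F.ContainsCopy G` means `G` contains a subgraph isomorphic to `F`,
i.e. there is an injective graph homomorphism from `F` to `G`. -/
def SimpleGraph.ContainsCopy {α β : Type*} (F : SimpleGraph α) (G : SimpleGraph β) : Prop :=
  ∃ f : F →g G, Function.Injective f

/-- `F.FreeIn G` means `G` is `F`-free. -/
def SimpleGraph.FreeIn {α β : Type*} (F : SimpleGraph α) (G : SimpleGraph β) : Prop :=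
  ¬ F.ContainsCopy G

/-- `cliqueCount G r` is the number of `r`-cliques of `G` (copies of `K_r`). -/
noncomputable def cliqueCount {β : Type*} (G : SimpleGraph β) (r : ℕ) : ℕ :=
  Nat.card {s : Finset β // G.IsNClique r s}

/-- `cliqueCountOn G r v` is the number of `r`-cliques of `G` containing the vertex `v`. -/
noncomputable def cliqueCountOn {β : Type*} (G : SimpleGraph β) (r : ℕ) (v : β) : ℕ :=
  Nat.card {s : Finset β // G.IsNClique r s ∧ v ∈ s}

/-- The generalized Turán number `ex(n, K_r, F)`: the maximum number of `r`-cliques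
in an `F`-free graph on `n` vertices. -/
noncomputable def exTuran {α : Type*} (n r : ℕ) (F : SimpleGraph α) : ℕ :=
  sSup {m : ℕ | ∃ G : SimpleGraph (Fin n), F.FreeIn G ∧ m = cliqueCount G r}

/-- `multiCopies m F` is the vertex-disjoint union of `m` copies of `F`. -/
def multiCopies {α : Type*} (m : ℕ) (F : SimpleGraph α) : SimpleGraph (Fin m × α) where
  Adj x y := x.1 = y.1 ∧ F.Adj x.2 y.2
  symm := ⟨fun _ _ h => ⟨h.1.symm, h.2.symm⟩⟩
  loopless := ⟨fun x h => F.loopless.irrefl _ h.2⟩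

/-- The join `G ∨ H` of two vertex-disjoint graphs: their disjoint union together with
all edges between them. -/
def joinG {α β : Type*} (G : SimpleGraph α) (H : SimpleGraph β) : SimpleGraph (α ⊕ β) where
  Adj x y := match x, y with
    | Sum.inl u, Sum.inl v => G.Adj u v
    | Sum.inr u, Sum.inr v => H.Adj u v
    | _, _ => True
  symm := ⟨by rintro (u|u) (v|v) h <;> first | exact h.symm | trivial⟩
  loopless := ⟨by rintro (u|u) h <;> exact absurd h (by simp)⟩

/-!
Deletion method. A colouring `χ : Sym2 V → Fin q` chosen uniformly at random makes the pairs of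
colour `0` a random graph with edge probability `1 / q`; averaging over all `χ` is the counting
form of taking expectations. On average it has `(n choose 2) / q` edges and at most `(n / q) ^ K`
labelled copies of `C_K`, and deleting one edge from each copy leaves a `C_K`-free graph, so some
`χ` gives one with at least `(n choose 2) / q - (n / q) ^ K` edges. For `q ≈ 2 n ^ ((K-2)/(K-1))`
both terms are of order `n ^ (K/(K-1))`, and the first wins by a constant factor.
-/

theorem SimpleGraph.freeIn_iff_free {α β : Type*} {F : SimpleGraph α} {G : SimpleGraph β} :
    F.FreeIn G ↔ F.Free G :=
  not_congr ⟨fun ⟨f, hf⟩ => ⟨⟨f, hf⟩⟩, fun ⟨c⟩ => ⟨c.toHom, c.injective⟩⟩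

theorem SimpleGraph.card_edgeFinset_cycleGraph {K : ℕ} (hK : 3 ≤ K) :
    #(cycleGraph K).edgeFinset = K := by
  obtain ⟨m, rfl⟩ : ∃ m, K = m + 3 := ⟨K - 3, by omega⟩
  have h := (cycleGraph (m + 3)).sum_degrees_eq_twice_card_edges
  simp only [cycleGraph_degree_three_le, sum_const, card_univ, Fintype.card_fin,
    smul_eq_mul] at h
  omega

theorem SimpleGraph.cycleGraph_ne_bot {K : ℕ} (hK : 3 ≤ K) : cycleGraph K ≠ ⊥ := by
  intro h
  have := card_edgeFinset_cycleGraph hK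
  rw [card_eq_zero.2 (edgeFinset_eq_empty.2 h)] at this
  omega

theorem card_filter_forall_eq_zero_mul_pow {α : Type*} [Fintype α] [DecidableEq α] (q : ℕ)
    [NeZero q] (S : Finset α) :
    #{χ : α → Fin q | ∀ e ∈ S, χ e = 0} * q ^ #S = q ^ Fintype.card α := by
  have : ({χ : α → Fin q | ∀ e ∈ S, χ e = 0} : Finset _) =
      Fintype.piFinset fun e => if e ∈ S then {0} else univ := by
    ext χ
    simp only [mem_filter_univ, Fintype.mem_piFinset]
    refine ⟨fun h e => ?_, fun h e he => by simpa [he] using h e⟩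
    split_ifs with he <;> simp [h e, *]
  rw [this, Fintype.card_piFinset, ← card_compl_add_card S, pow_add]
  simp [apply_ite Finset.card, Finset.prod_ite, Finset.filter_not, compl_eq_univ_sdiff]

namespace SimpleGraph

variable {V W : Type*} [Fintype V] [DecidableEq V] {q : ℕ} [NeZero q]

def graphOfZeros (χ : Sym2 V → Fin q) : SimpleGraph V := fromEdgeSet {e | χ e = 0}

instance (χ : Sym2 V → Fin q) : DecidableRel (graphOfZeros χ).Adj := fun _ _ =>
  decidable_of_iff' _ (fromEdgeSet_adj _)

theorem edgeFinset_graphOfZeros (χ : Sym2 V → Fin q) :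
    (graphOfZeros χ).edgeFinset = {e ∈ (⊤ : SimpleGraph V).edgeFinset | χ e = 0} := by
  ext e
  induction e with
  | _ u v =>
    rw [mem_edgeFinset, mem_filter, mem_edgeFinset, mem_edgeSet, mem_edgeSet, graphOfZeros,
      fromEdgeSet_adj, top_adj]
    exact and_comm

theorem sum_card_edgeFinset_graphOfZeros_mul :
    (∑ χ : Sym2 V → Fin q, #(graphOfZeros χ).edgeFinset) * q =
      #(⊤ : SimpleGraph V).edgeFinset * q ^ Fintype.card (Sym2 V) := by
  have swap := sum_card_bipartiteAbove_eq_sum_card_bipartiteBelow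
    (fun (χ : Sym2 V → Fin q) e => χ e = 0)
    (s := univ) (t := (⊤ : SimpleGraph V).edgeFinset)
  simp only [bipartiteAbove, bipartiteBelow] at swap
  simp_rw [edgeFinset_graphOfZeros]
  rw [swap, sum_mul, ← smul_eq_mul, ← sum_const]
  refine sum_congr rfl fun e _ => ?_
  simpa using card_filter_forall_eq_zero_mul_pow q {e}

variable [Fintype W] {H : SimpleGraph W} [DecidableRel H.Adj]

theorem card_filter_forall_map_eq_zero_mul_pow (f : W ↪ V) :
    #{χ : Sym2 V → Fin q | ∀ e ∈ H.edgeFinset, χ (f.sym2Map e) = 0} * q ^ #H.edgeFinset =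
      q ^ Fintype.card (Sym2 V) := by
  simpa [card_map] using card_filter_forall_eq_zero_mul_pow q (H.edgeFinset.map f.sym2Map)

theorem labelledCopyCount_graphOfZeros_le (χ : Sym2 V → Fin q) :
    (graphOfZeros χ).labelledCopyCount H ≤
      #{f : W ↪ V | ∀ e ∈ H.edgeFinset, χ (f.sym2Map e) = 0} := by
  classical
  rw [labelledCopyCount, ← Fintype.card_coe]
  convert Fintype.card_le_of_injective
    (fun c : Copy H (graphOfZeros χ) => (⟨c.toEmbedding, ?_⟩ :
      {f // f ∈ ({f : W ↪ V | ∀ e ∈ H.edgeFinset, χ (f.sym2Map e) = 0} : Finset _)})) ?_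
  · simp only [mem_filter_univ]
    intro e he
    induction e with
    | _ a b => exact ((fromEdgeSet_adj _).1 (c.toHom.map_adj (mem_edgeFinset.1 he))).1
  · exact fun c d hcd => Copy.ext fun a => DFunLike.congr_fun (congrArg Subtype.val hcd) a

theorem sum_labelledCopyCount_graphOfZeros_mul_le :
    (∑ χ : Sym2 V → Fin q, (graphOfZeros χ).labelledCopyCount H) * q ^ #H.edgeFinset ≤
      Fintype.card V ^ Fintype.card W * q ^ Fintype.card (Sym2 V) := by
  calc (∑ χ : Sym2 V → Fin q, (graphOfZeros χ).labelledCopyCount H) * q ^ #H.edgeFinset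
      ≤ (∑ χ : Sym2 V → Fin q,
          #{f : W ↪ V | ∀ e ∈ H.edgeFinset, χ (f.sym2Map e) = 0}) * q ^ #H.edgeFinset := by
        gcongr with χ; exact labelledCopyCount_graphOfZeros_le χ
    _ = Fintype.card (W ↪ V) * q ^ Fintype.card (Sym2 V) := by
        have swap := sum_card_bipartiteAbove_eq_sum_card_bipartiteBelow (s := univ) (t := univ)
          fun (χ : Sym2 V → Fin q) (f : W ↪ V) => ∀ e ∈ H.edgeFinset, χ (f.sym2Map e) = 0
        simp only [bipartiteAbove, bipartiteBelow] at swap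
        rw [swap, sum_mul, ← card_univ, ← smul_eq_mul, ← sum_const]
        exact sum_congr rfl fun f _ => card_filter_forall_map_eq_zero_mul_pow f
    _ ≤ Fintype.card V ^ Fintype.card W * q ^ Fintype.card (Sym2 V) := by
        gcongr
        rw [Fintype.card_embedding_eq]
        exact Nat.descFactorial_le_pow _ _

theorem exists_free_le_card_edgeSet (hH : H ≠ ⊥) {t : ℝ}
    (h : (Fintype.card V : ℝ) ^ Fintype.card W / q ^ #H.edgeFinset + t ≤
      #(⊤ : SimpleGraph V).edgeFinset / q) :
    ∃ G : SimpleGraph V, H.Free G ∧ t ≤ Nat.card G.edgeSet := by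
  set Q : ℝ := q ^ Fintype.card (Sym2 V) with hQ
  have hq : (0 : ℝ) < q := by exact_mod_cast NeZero.pos q
  have hedges : ∑ χ : Sym2 V → Fin q, (#(graphOfZeros χ).edgeFinset : ℝ) =
      #(⊤ : SimpleGraph V).edgeFinset * Q / q := by
    rw [eq_div_iff hq.ne', hQ]
    exact_mod_cast sum_card_edgeFinset_graphOfZeros_mul (V := V) (q := q)
  have hcopies : ∑ χ : Sym2 V → Fin q, ((graphOfZeros χ).labelledCopyCount H : ℝ) ≤
      Fintype.card V ^ Fintype.card W * Q / q ^ #H.edgeFinset := by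
    rw [le_div_iff₀ (by positivity), hQ]
    exact_mod_cast sum_labelledCopyCount_graphOfZeros_mul_le (V := V) (q := q) (H := H)
  have hsum : ∑ _χ : Sym2 V → Fin q, t ≤ ∑ χ : Sym2 V → Fin q,
      ((#(graphOfZeros χ).edgeFinset : ℝ) - (graphOfZeros χ).labelledCopyCount H) := by
    rw [sum_sub_distrib, hedges, sum_const, card_univ, Fintype.card_fun, Fintype.card_fin,
      nsmul_eq_mul]
    have hQh := mul_le_mul_of_nonneg_left h (by positivity : (0 : ℝ) ≤ Q)
    push_cast
    linarith [show Q * ((Fintype.card V : ℝ) ^ Fintype.card W / q ^ #H.edgeFinset + t) =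
      Fintype.card V ^ Fintype.card W * Q / q ^ #H.edgeFinset + Q * t by ring,
      show Q * (#(⊤ : SimpleGraph V).edgeFinset / q : ℝ) =
      #(⊤ : SimpleGraph V).edgeFinset * Q / q by ring]
  obtain ⟨χ, -, hχ⟩ := exists_le_of_sum_le univ_nonempty hsum
  refine ⟨(graphOfZeros χ).killCopies H, free_killCopies hH, ?_⟩
  have hkill : (#(graphOfZeros χ).edgeFinset : ℝ) ≤
      #((graphOfZeros χ).killCopies H).edgeFinset + (graphOfZeros χ).labelledCopyCount H := by
    exact_mod_cast
      (le_card_edgeFinset_killCopies_add_copyCount (G := graphOfZeros χ) (H := H)).trans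
        (Nat.add_le_add_left copyCount_le_labelledCopyCount _)
  rw [Nat.card_eq_fintype_card, ← edgeFinset_card]
  linarith

end SimpleGraph

theorem exists_div_pow_add_rpow_le (K : ℕ) (hK : 4 ≤ K) {x : ℝ} (hx : 2 ≤ x) :
    ∃ q : ℕ, 0 < q ∧
      (x / q) ^ K + x ^ ((1 : ℝ) + 1 / ((K : ℝ) - 1)) / 48 ≤ x * (x - 1) / 2 / q := by
  have hx0 : 0 < x := by linarith
  have hK1 : (3 : ℝ) ≤ (K : ℝ) - 1 := by
    have : (4 : ℝ) ≤ K := by exact_mod_cast hK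
    linarith
  set A := x ^ (((K : ℝ) - 2) / ((K : ℝ) - 1))
  have hA1 : 1 ≤ A := Real.one_le_rpow (by linarith) (div_nonneg (by linarith) (by linarith))
  have hApow : A ^ (K - 1) = x ^ (K - 2) := by
    rw [← Real.rpow_natCast, ← Real.rpow_mul hx0.le, ← Real.rpow_natCast]
    congr 1
    push_cast [Nat.cast_sub (by omega : 1 ≤ K), Nat.cast_sub (by omega : 2 ≤ K)]
    field_simp
  have hexp : x ^ ((1 : ℝ) + 1 / ((K : ℝ) - 1)) = x ^ 2 / A := by
    rw [← Real.rpow_two, ← Real.rpow_sub hx0]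
    congr 1
    field_simp
    ring
  refine ⟨⌈2 * A⌉₊, Nat.ceil_pos.2 (by positivity), ?_⟩
  have hq1 : 2 * A ≤ ⌈2 * A⌉₊ := Nat.le_ceil _
  have hq2 : (⌈2 * A⌉₊ : ℝ) ≤ 3 * A :=
    (Nat.ceil_lt_add_one (by positivity)).le.trans (by linarith)
  have hcycles : (x / ⌈2 * A⌉₊) ^ K ≤ x ^ 2 / A / 16 :=
    calc (x / ⌈2 * A⌉₊) ^ K ≤ (x / (2 * A)) ^ K := by gcongr
      _ = x ^ 2 / A / 2 ^ K := by
        have hxK : x ^ K = x ^ 2 * A ^ (K - 1) := by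
          rw [hApow, ← pow_add]; congr 1; omega
        have hAK : A ^ K = A * A ^ (K - 1) := by
          rw [← pow_succ']; congr 1; omega
        rw [div_pow, mul_pow, hxK, hAK]
        field_simp
      _ ≤ x ^ 2 / A / 16 := by
        gcongr
        calc (16 : ℝ) = 2 ^ 4 := by norm_num
          _ ≤ 2 ^ K := pow_le_pow_right₀ (by norm_num) hK
  have hedges : x ^ 2 / A / 12 ≤ x * (x - 1) / 2 / ⌈2 * A⌉₊ :=
    calc x ^ 2 / A / 12 = x ^ 2 / 4 / (3 * A) := by field_simp; ring
      _ ≤ x * (x - 1) / 2 / ⌈2 * A⌉₊ :=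
        div_le_div₀ (by nlinarith) (by nlinarith) (by positivity) hq2
  rw [hexp]
  linarith

open SimpleGraph in
/-- dense `C_{2k}`-free graphs exist. -/
theorem stmt6 (k : ℕ) (hk : 2 ≤ k) :
    ∃ c : ℝ, 0 < c ∧ ∃ N : ℕ, ∀ n : ℕ, N ≤ n → ∃ G : SimpleGraph (Fin n),
      (SimpleGraph.cycleGraph (2 * k)).FreeIn G ∧
      c * (n : ℝ) ^ ((1 : ℝ) + 1 / (2 * (k : ℝ) - 1)) ≤ (Nat.card G.edgeSet : ℝ) := by
  refine ⟨1 / 48, by norm_num, 2, fun n hn => ?_⟩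
  have hK : 3 ≤ 2 * k := by omega
  obtain ⟨q, hq, hineq⟩ := exists_div_pow_add_rpow_le (2 * k) (by omega) (x := n)
    (by exact_mod_cast hn)
  have : NeZero q := ⟨hq.ne'⟩
  obtain ⟨G, hfree, hG⟩ := exists_free_le_card_edgeSet (V := Fin n) (q := q)
    (cycleGraph_ne_bot hK) (t := (n : ℝ) ^ ((1 : ℝ) + 1 / (2 * (k : ℝ) - 1)) / 48) (by
      rw [card_edgeFinset_top_eq_card_choose_two, Nat.cast_choose_two,
        card_edgeFinset_cycleGraph hK, Fintype.card_fin, Fintype.card_fin, ← div_pow]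
      convert hineq using 4
      push_cast
      ring)
  exact ⟨G, freeIn_iff_free.2 hfree, by linarith⟩
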